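/- For ψ, φ₁, φ₂ ∈ ℝ let v(ψ, φ₁, φ₂) = (cos ψ · e^{iφ₁}, sin ψ · e^{iφ₂}) ∈ ℂ². Let ψ̂, φ̂₁, φ̂₂ be random angles satisfying E[(ψ̂ − ψ)²] ≤ σ_ψ², E[(φ̂₁ − φ₁)²] ≤ σ_φ², and E[(φ̂₂ − φ₂)²] ≤ σ_φ². Then the expected squared chordal distance between the true and privatized one-dimensional beamforming subspaces satisfies E[ 1 − |⟨v(ψ, φ₁, φ₂), v(ψ̂, φ̂₁, φ̂₂)⟩|² ] ≤ 2·(σ_ψ² + 2σ_φ²). -/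

import Mathlib

open Real Complex MeasureTheory

/-!
For unit vectors `1 - |⟨a, b⟩|² ≤ 2 (1 - Re ⟨a, b⟩) = ‖a - b‖²`. For the beamforming vectors,
`Re ⟨v, v̂⟩ = cos ψ cos ψ̂ cos (φ̂₁ - φ₁) + sin ψ sin ψ̂ cos (φ̂₂ - φ₂)`, and `1 - cos t ≤ t² / 2`
applied to `ψ̂ - ψ` and to the two phase errors bounds `‖v - v̂‖²` by the sum of the squared
angle errors. Taking expectations gives the claim.
-/

/-- The IEEE 802.11 (`N_t = 2`, one spatial stream) beamforming vector reconstructed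
from a Givens rotation angle `ψ` and per-antenna phase angles `φ₁, φ₂`:
`v(ψ, φ₁, φ₂) = (cos ψ · e^{iφ₁}, sin ψ · e^{iφ₂}) ∈ ℂ²`, a unit vector. -/
noncomputable def bfVec (ψ φ₁ φ₂ : ℝ) : EuclideanSpace ℂ (Fin 2) :=
  WithLp.toLp 2 ![(Real.cos ψ : ℂ) * Complex.exp (φ₁ * Complex.I),
    (Real.sin ψ : ℂ) * Complex.exp (φ₂ * Complex.I)]

section UnitVectors

variable {𝕜 E : Type*} [RCLike 𝕜] [NormedAddCommGroup E] [InnerProductSpace 𝕜 E]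

theorem one_sub_norm_inner_sq_nonneg {a b : E} (ha : ‖a‖ = 1) (hb : ‖b‖ = 1) :
    0 ≤ 1 - ‖(inner 𝕜 a b : 𝕜)‖ ^ 2 := by
  have h := norm_inner_le_norm (𝕜 := 𝕜) a b
  rw [ha, hb, mul_one] at h
  nlinarith [norm_nonneg (inner 𝕜 a b : 𝕜)]

theorem one_sub_norm_inner_sq_le_norm_sub_sq {a b : E} (ha : ‖a‖ = 1) (hb : ‖b‖ = 1) :
    1 - ‖(inner 𝕜 a b : 𝕜)‖ ^ 2 ≤ ‖a - b‖ ^ 2 := by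
  have hre : RCLike.re (inner 𝕜 a b : 𝕜) ≤ ‖(inner 𝕜 a b : 𝕜)‖ := RCLike.re_le_norm _
  have hle : ‖(inner 𝕜 a b : 𝕜)‖ ≤ 1 := by
    simpa [ha, hb] using norm_inner_le_norm (𝕜 := 𝕜) a b
  rw [@norm_sub_sq 𝕜, ha, hb]
  nlinarith [norm_nonneg (inner 𝕜 a b : 𝕜)]

end UnitVectors

section BeamformingVector

theorem norm_bfVec (ψ φ₁ φ₂ : ℝ) : ‖bfVec ψ φ₁ φ₂‖ = 1 := by
  have h (a t : ℝ) : ‖(a : ℂ) * Complex.exp (t * Complex.I)‖ = |a| := by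
    rw [norm_mul, Complex.norm_real, Real.norm_eq_abs, Complex.norm_exp_ofReal_mul_I, mul_one]
  rw [EuclideanSpace.norm_eq]
  simp only [bfVec, PiLp.toLp_apply, Fin.sum_univ_two, Matrix.cons_val_zero, Matrix.cons_val_one, h]
  rw [_root_.sq_abs, _root_.sq_abs, Real.cos_sq_add_sin_sq, Real.sqrt_one]

theorem re_inner_bfVec (ψ φ₁ φ₂ ψ' φ₁' φ₂' : ℝ) :
    (inner ℂ (bfVec ψ φ₁ φ₂) (bfVec ψ' φ₁' φ₂') : ℂ).re =
      Real.cos ψ * Real.cos ψ' * Real.cos (φ₁' - φ₁)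
        + Real.sin ψ * Real.sin ψ' * Real.cos (φ₂' - φ₂) := by
  simp only [bfVec, ofReal_cos, exp_mul_I, ofReal_sin, PiLp.inner_apply, RCLike.inner_apply,
    Fin.sum_univ_two, Fin.isValue, Matrix.cons_val_zero, map_mul, map_add, conj_I, mul_neg,
    Matrix.cons_val_one, Matrix.cons_val_fin_one, add_re, mul_re, cos_ofReal_re, sin_ofReal_re,
    I_re, mul_zero, sin_ofReal_im, I_im, mul_one, sub_self, add_zero, cos_ofReal_im, add_im,
    mul_im, zero_add, zero_mul, sub_zero, conj_re, neg_re, conj_im, neg_zero, neg_im,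
    sub_neg_eq_add, Real.cos_sub]
  ring

theorem norm_bfVec_sub_sq_le (ψ φ₁ φ₂ ψ' φ₁' φ₂' : ℝ) :
    ‖bfVec ψ φ₁ φ₂ - bfVec ψ' φ₁' φ₂'‖ ^ 2 ≤ (ψ' - ψ) ^ 2 + (φ₁' - φ₁) ^ 2 + (φ₂' - φ₂) ^ 2 := by
  set c := Real.cos ψ * Real.cos ψ'
  set s := Real.sin ψ * Real.sin ψ'
  have hdecomp : 1 - (inner ℂ (bfVec ψ φ₁ φ₂) (bfVec ψ' φ₁' φ₂') : ℂ).re =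
      (1 - Real.cos (ψ' - ψ)) + c * (1 - Real.cos (φ₁' - φ₁)) + s * (1 - Real.cos (φ₂' - φ₂)) := by
    rw [re_inner_bfVec, Real.cos_sub ψ' ψ]; ring
  have hc : c ≤ 1 := by nlinarith [Real.cos_sq_add_sin_sq ψ, Real.cos_sq_add_sin_sq ψ']
  have hs : s ≤ 1 := by nlinarith [Real.cos_sq_add_sin_sq ψ, Real.cos_sq_add_sin_sq ψ']
  have hψ := Real.one_sub_sq_div_two_le_cos (x := ψ' - ψ)
  have h₁ : c * (1 - Real.cos (φ₁' - φ₁)) ≤ (φ₁' - φ₁) ^ 2 / 2 :=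
    (mul_le_of_le_one_left (sub_nonneg.2 (Real.cos_le_one _)) hc).trans
      (by linarith [Real.one_sub_sq_div_two_le_cos (x := φ₁' - φ₁)])
  have h₂ : s * (1 - Real.cos (φ₂' - φ₂)) ≤ (φ₂' - φ₂) ^ 2 / 2 :=
    (mul_le_of_le_one_left (sub_nonneg.2 (Real.cos_le_one _)) hs).trans
      (by linarith [Real.one_sub_sq_div_two_le_cos (x := φ₂' - φ₂)])
  rw [@norm_sub_sq ℂ, norm_bfVec, norm_bfVec, RCLike.re_to_complex]
  linarith

theorem bfVec_chordal_le (ψ φ₁ φ₂ ψ' φ₁' φ₂' : ℝ) :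
    1 - ‖(inner ℂ (bfVec ψ φ₁ φ₂) (bfVec ψ' φ₁' φ₂') : ℂ)‖ ^ 2 ≤
      (ψ' - ψ) ^ 2 + (φ₁' - φ₁) ^ 2 + (φ₂' - φ₂) ^ 2 :=
  (one_sub_norm_inner_sq_le_norm_sub_sq (norm_bfVec _ _ _) (norm_bfVec _ _ _)).trans
    (norm_bfVec_sub_sq_le _ _ _ _ _ _)

end BeamformingVector

theorem bfVec_expected_chordal_le_general {Ω : Type*} [MeasurableSpace Ω]
    (μ : Measure Ω) [IsProbabilityMeasure μ]
    (ψ φ₁ φ₂ σψ σφ : ℝ) (ψh φ₁h φ₂h : Ω → ℝ)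
    (hiψ : Integrable (fun ω => (ψh ω - ψ) ^ 2) μ)
    (hiφ₁ : Integrable (fun ω => (φ₁h ω - φ₁) ^ 2) μ)
    (hiφ₂ : Integrable (fun ω => (φ₂h ω - φ₂) ^ 2) μ)
    (hψ : ∫ ω, (ψh ω - ψ) ^ 2 ∂μ ≤ σψ ^ 2)
    (hφ₁ : ∫ ω, (φ₁h ω - φ₁) ^ 2 ∂μ ≤ σφ ^ 2)
    (hφ₂ : ∫ ω, (φ₂h ω - φ₂) ^ 2 ∂μ ≤ σφ ^ 2) :
    ∫ ω, (1 - ‖(inner ℂ (bfVec ψ φ₁ φ₂) (bfVec (ψh ω) (φ₁h ω) (φ₂h ω)) : ℂ)‖ ^ 2) ∂μ ≤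
      2 * (σψ ^ 2 + 2 * σφ ^ 2) := by
  have hmono := integral_mono_of_nonneg
    (ae_of_all μ fun ω => one_sub_norm_inner_sq_nonneg (𝕜 := ℂ) (norm_bfVec ψ φ₁ φ₂)
      (norm_bfVec (ψh ω) (φ₁h ω) (φ₂h ω)))
    ((hiψ.add hiφ₁).add hiφ₂)
    (ae_of_all μ fun ω => bfVec_chordal_le ψ φ₁ φ₂ (ψh ω) (φ₁h ω) (φ₂h ω))
  rw [integral_add' (hiψ.add hiφ₁) hiφ₂, integral_add' hiψ hiφ₁] at hmono
  linarith [sq_nonneg σψ, sq_nonneg σφ]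

/-- **Expected squared chordal distance of the privatized beamforming subspace.**
If the random angles `ψ̂, φ̂₁, φ̂₂` satisfy `E[(ψ̂−ψ)²] ≤ σ_ψ²`, `E[(φ̂₁−φ₁)²] ≤ σ_φ²`,
`E[(φ̂₂−φ₂)²] ≤ σ_φ²`, then the expected squared chordal distance between the true and
privatized one-dimensional beamforming subspaces satisfies
`E[1 − |⟨v(ψ,φ₁,φ₂), v(ψ̂,φ̂₁,φ̂₂)⟩|²] ≤ 2·(σ_ψ² + 2σ_φ²)`. -/
theorem bfVec_expected_chordal_le {Ω : Type*} [MeasurableSpace Ω]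
    (μ : Measure Ω) [IsProbabilityMeasure μ]
    (ψ φ₁ φ₂ σψ σφ : ℝ) (ψh φ₁h φ₂h : Ω → ℝ)
    (hmψ : AEMeasurable ψh μ) (hmφ₁ : AEMeasurable φ₁h μ) (hmφ₂ : AEMeasurable φ₂h μ)
    (hiψ : Integrable (fun ω => (ψh ω - ψ) ^ 2) μ)
    (hiφ₁ : Integrable (fun ω => (φ₁h ω - φ₁) ^ 2) μ)
    (hiφ₂ : Integrable (fun ω => (φ₂h ω - φ₂) ^ 2) μ)
    (hψ : ∫ ω, (ψh ω - ψ) ^ 2 ∂μ ≤ σψ ^ 2)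
    (hφ₁ : ∫ ω, (φ₁h ω - φ₁) ^ 2 ∂μ ≤ σφ ^ 2)
    (hφ₂ : ∫ ω, (φ₂h ω - φ₂) ^ 2 ∂μ ≤ σφ ^ 2) :
    ∫ ω, (1 - ‖(inner ℂ (bfVec ψ φ₁ φ₂) (bfVec (ψh ω) (φ₁h ω) (φ₂h ω)) : ℂ)‖ ^ 2) ∂μ ≤
      2 * (σψ ^ 2 + 2 * σφ ^ 2) :=
  bfVec_expected_chordal_le_general μ ψ φ₁ φ₂ σψ σφ ψh φ₁h φ₂h hiψ hiφ₁ hiφ₂ hψ hφ₁ hφ₂
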